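/- Let Q be a supported quantale with support ς and unit e. Then the set Π(Q) of partial units contains e and is closed under multiplication and involution, and under the multiplication of Q it is an inverse monoid in which the inverse of a is a*: for every a ∈ Π(Q), a a* a = a and a* a a* = a*, and if b ∈ Π(Q) satisfies a b a = a and b a b = b then b = a*. Moreover, the idempotents of Π(Q) are exactly the partial units a with a ≤ e, and the natural order of the inverse monoid Π(Q) coincides with the order inherited from Q. -/

import Mathlib

/-!
The support axioms give `a ≤ ς(a) a ≤ a a* a` for every `a`, and for a partial unit the reverse
inequality holds because `a a* ≤ e`; so `a a* a = a`. The rest only uses that multiplication and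
involution are monotone. An idempotent partial unit `f` satisfies `f* f = f* f f ≤ f`, hence
`f* = f* f f* ≤ f f* ≤ e` and `f ≤ e`; conversely `f ≤ e` forces `f ≤ f f* f ≤ f*`, so `f` is
self-adjoint and idempotent. If `b` is an inverse of `a`, then `ab` and `ba` are idempotent, hence
below `e`, which squeezes `b` against `a*`. Finally `a ≤ b` gives `a = (a b*) b` with
`a b* ≤ b b* ≤ e`.
-/

/-- A partial unit in a unital involutive quantale. -/
def IsPartialUnit {Q : Type*} [CompleteLattice Q]
    (m : Q → Q → Q) (e : Q) (st : Q → Q) (a : Q) : Prop :=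
  m a (st a) ≤ e ∧ m (st a) a ≤ e

theorem monotone_of_map_sSup {α β : Type*} [CompleteLattice α] [CompleteLattice β] {f : α → β}
    (hf : ∀ s : Set α, f (sSup s) = sSup (f '' s)) : Monotone f :=
  OrderHomClass.mono (sSupHom.mk f hf)

section OrderedStarMonoid

variable {M : Type*} [Monoid M] [StarMul M] [CompleteLattice M] {a b : M}

theorem isPartialUnit_one : IsPartialUnit (· * ·) (1 : M) star 1 := by
  simp [IsPartialUnit]

theorem isPartialUnit_star_iff :
    IsPartialUnit (· * ·) 1 star (star a) ↔ IsPartialUnit (· * ·) 1 star a := by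
  rw [IsPartialUnit, IsPartialUnit, star_star, and_comm]

theorem le_mul_star_mul_of_support [MulRightMono M] {sp : M → M}
    (hsp_le : ∀ x, sp x ≤ x * star x) (hle_sp : ∀ x, x ≤ sp x * x) (a : M) :
    a ≤ a * star a * a :=
  (hle_sp a).trans (mul_le_mul_left (hsp_le a) a)

theorem IsPartialUnit.mul_star_mul [MulRightMono M] (hM : ∀ x : M, x ≤ x * star x * x)
    (ha : IsPartialUnit (· * ·) 1 star a) : a * star a * a = a :=
  le_antisymm (by simpa using mul_le_mul_left ha.1 a) (hM a)

theorem IsPartialUnit.star_mul_mul_star [MulRightMono M] (hM : ∀ x : M, x ≤ x * star x * x)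
    (ha : IsPartialUnit (· * ·) 1 star a) : star a * a * star a = star a := by
  simpa using (isPartialUnit_star_iff.mpr ha).mul_star_mul hM

theorem IsPartialUnit.le_one_of_mul_self_eq [MulRightMono M]
    (hstar : Monotone (star : M → M)) (hM : ∀ x : M, x ≤ x * star x * x)
    (ha : IsPartialUnit (· * ·) 1 star a) (h : a * a = a) : a ≤ 1 := by
  have hsa : star a * a ≤ a :=
    calc star a * a = star a * a * a := by rw [mul_assoc, h]
      _ ≤ 1 * a := mul_le_mul_left ha.2 a
      _ = a := one_mul a
  have hs : star a ≤ 1 :=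
    calc star a = star a * a * star a := (ha.star_mul_mul_star hM).symm
      _ ≤ a * star a := mul_le_mul_left hsa _
      _ ≤ 1 := ha.1
  simpa using hstar hs

variable [MulLeftMono M] [MulRightMono M]

theorem le_star_of_le_one (hM : ∀ x : M, x ≤ x * star x * x) (ha : a ≤ 1) : a ≤ star a :=
  calc a ≤ a * star a * a := hM a
    _ ≤ 1 * star a * 1 := by gcongr
    _ = star a := by rw [one_mul, mul_one]

theorem star_eq_self_of_le_one (hstar : Monotone (star : M → M))
    (hM : ∀ x : M, x ≤ x * star x * x) (ha : a ≤ 1) : star a = a :=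
  le_antisymm (by simpa using hstar (le_star_of_le_one hM ha)) (le_star_of_le_one hM ha)

theorem mul_self_eq_self_of_le_one (hstar : Monotone (star : M → M))
    (hM : ∀ x : M, x ≤ x * star x * x) (ha : a ≤ 1) : a * a = a := by
  refine le_antisymm (by simpa using mul_le_mul_right ha a) ?_
  calc a ≤ a * star a * a := hM a
    _ = a * a * a := by rw [star_eq_self_of_le_one hstar hM ha]
    _ ≤ a * a * 1 := by gcongr
    _ = a * a := mul_one _

theorem IsPartialUnit.mul
    (ha : IsPartialUnit (· * ·) 1 star a) (hb : IsPartialUnit (· * ·) 1 star b) :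
    IsPartialUnit (· * ·) 1 star (a * b) := by
  constructor
  · calc a * b * star (a * b) = a * (b * star b) * star a := by simp only [star_mul, mul_assoc]
      _ ≤ a * 1 * star a := by gcongr; exact hb.1
      _ ≤ 1 := by simpa using ha.1
  · calc star (a * b) * (a * b) = star b * (star a * a) * b := by simp only [star_mul, mul_assoc]
      _ ≤ star b * 1 * b := by gcongr; exact ha.2
      _ ≤ 1 := by simpa using hb.2

theorem IsPartialUnit.mul_self_eq_self_iff
    (hstar : Monotone (star : M → M)) (hM : ∀ x : M, x ≤ x * star x * x)
    (ha : IsPartialUnit (· * ·) 1 star a) : a * a = a ↔ a ≤ 1 :=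
  ⟨ha.le_one_of_mul_self_eq hstar hM, mul_self_eq_self_of_le_one hstar hM⟩

theorem IsPartialUnit.eq_star_of_mul_mul
    (hstar : Monotone (star : M → M)) (hM : ∀ x : M, x ≤ x * star x * x)
    (ha : IsPartialUnit (· * ·) 1 star a) (hb : IsPartialUnit (· * ·) 1 star b)
    (haba : a * b * a = a) (hbab : b * a * b = b) :
    b = star a := by
  have hab : a * b ≤ 1 :=
    (ha.mul hb).le_one_of_mul_self_eq hstar hM (by rw [← mul_assoc, haba])
  have hba : b * a ≤ 1 :=
    (hb.mul ha).le_one_of_mul_self_eq hstar hM (by rw [← mul_assoc, hbab])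
  apply le_antisymm
  · calc b = b * a * b := hbab.symm
      _ ≤ b * (a * star a * a) * b := by gcongr; exact hM a
      _ = b * a * (star a * (a * b)) := by simp only [mul_assoc]
      _ ≤ 1 * (star a * 1) := by gcongr
      _ = star a := by rw [one_mul, mul_one]
  · calc star a = star a * a * star a := (ha.star_mul_mul_star hM).symm
      _ = star a * (a * b * a) * star a := by rw [haba]
      _ = star a * a * b * (a * star a) := by simp only [mul_assoc]
      _ ≤ 1 * b * 1 := by gcongr; exacts [ha.2, ha.1]
      _ = b := by rw [one_mul, mul_one]

theorem IsPartialUnit.exists_idempotent_eq_mul_iff_le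
    (hstar : Monotone (star : M → M)) (hM : ∀ x : M, x ≤ x * star x * x)
    (ha : IsPartialUnit (· * ·) 1 star a) (hb : IsPartialUnit (· * ·) 1 star b) :
    (∃ f : M, IsPartialUnit (· * ·) 1 star f ∧ f * f = f ∧ a = f * b) ↔ a ≤ b := by
  constructor
  · rintro ⟨f, hf, hff, rfl⟩
    simpa using mul_le_mul_left ((hf.mul_self_eq_self_iff hstar hM).mp hff) b
  · intro hab
    have hf : a * star b ≤ 1 := (mul_le_mul_left hab _).trans hb.1
    refine ⟨a * star b, ha.mul (isPartialUnit_star_iff.mpr hb),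
      mul_self_eq_self_of_le_one hstar hM hf, ?_⟩
    apply le_antisymm
    · calc a ≤ a * star a * a := hM a
        _ ≤ a * star b * b := by gcongr; exact hstar hab
    · calc a * star b * b = a * (star b * b) := mul_assoc _ _ _
        _ ≤ a * 1 := mul_le_mul_right hb.2 a
        _ = a := mul_one a

end OrderedStarMonoid

theorem stmt_8_general {Q : Type*} [CompleteLattice Q]
    (m : Q → Q → Q) (e : Q) (st : Q → Q) (sp : Q → Q)
    (hassoc : ∀ a b c : Q, m (m a b) c = m a (m b c))
    (hdistl : ∀ (a : Q) (T : Set Q), m a (sSup T) = sSup ((fun b => m a b) '' T))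
    (hdistr : ∀ (b : Q) (T : Set Q), m (sSup T) b = sSup ((fun a => m a b) '' T))
    (hel : ∀ a : Q, m e a = a) (her : ∀ a : Q, m a e = a)
    (hstsup : ∀ T : Set Q, st (sSup T) = sSup (st '' T))
    (hstst : ∀ a : Q, st (st a) = a)
    (hstm : ∀ a b : Q, st (m a b) = m (st b) (st a))
    (hsp2 : ∀ a : Q, sp a ≤ m a (st a))
    (hsp3 : ∀ a : Q, a ≤ m (sp a) a) :
    IsPartialUnit m e st e ∧
    (∀ a b : Q, IsPartialUnit m e st a → IsPartialUnit m e st b →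
      IsPartialUnit m e st (m a b)) ∧
    (∀ a : Q, IsPartialUnit m e st a → IsPartialUnit m e st (st a)) ∧
    (∀ a : Q, IsPartialUnit m e st a →
      m (m a (st a)) a = a ∧ m (m (st a) a) (st a) = st a) ∧
    (∀ a b : Q, IsPartialUnit m e st a → IsPartialUnit m e st b →
      m (m a b) a = a → m (m b a) b = b → b = st a) ∧
    (∀ a : Q, IsPartialUnit m e st a → (m a a = a ↔ a ≤ e)) ∧
    (∀ a b : Q, IsPartialUnit m e st a → IsPartialUnit m e st b →
      ((∃ f : Q, IsPartialUnit m e st f ∧ m f f = f ∧ a = m f b) ↔ a ≤ b)) := by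
  let _ : Monoid Q :=
    { mul := m, one := e, mul_assoc := hassoc, one_mul := hel, mul_one := her }
  let _ : StarMul Q := { star := st, star_involutive := hstst, star_mul := hstm }
  have : MulLeftMono Q := ⟨fun c _ _ h => monotone_of_map_sSup (hdistl c) h⟩
  have : MulRightMono Q := ⟨fun c _ _ h => monotone_of_map_sSup (hdistr c) h⟩
  have hstar : Monotone (star : Q → Q) := monotone_of_map_sSup hstsup
  have hM : ∀ x : Q, x ≤ x * star x * x := le_mul_star_mul_of_support hsp2 hsp3
  exact ⟨isPartialUnit_one, fun _ _ => IsPartialUnit.mul, fun _ => isPartialUnit_star_iff.mpr,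
    fun _ ha => ⟨IsPartialUnit.mul_star_mul hM ha, IsPartialUnit.star_mul_mul_star hM ha⟩,
    fun _ _ => IsPartialUnit.eq_star_of_mul_mul hstar hM,
    fun _ => IsPartialUnit.mul_self_eq_self_iff hstar hM,
    fun _ _ => IsPartialUnit.exists_idempotent_eq_mul_iff_le hstar hM⟩

/-- The partial units of a supported quantale form an inverse monoid
whose inversion is the involution, whose idempotents are the partial units below `e`,
and whose natural order coincides with the order of `Q` (Theorem `thm:ipiQ`-1). -/
theorem stmt_8 {Q : Type*} [CompleteLattice Q]
    (m : Q → Q → Q) (e : Q) (st : Q → Q) (sp : Q → Q)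
    (hassoc : ∀ a b c : Q, m (m a b) c = m a (m b c))
    (hdistl : ∀ (a : Q) (T : Set Q), m a (sSup T) = sSup ((fun b => m a b) '' T))
    (hdistr : ∀ (b : Q) (T : Set Q), m (sSup T) b = sSup ((fun a => m a b) '' T))
    (hel : ∀ a : Q, m e a = a) (her : ∀ a : Q, m a e = a)
    (hstsup : ∀ T : Set Q, st (sSup T) = sSup (st '' T))
    (hstst : ∀ a : Q, st (st a) = a)
    (hstm : ∀ a b : Q, st (m a b) = m (st b) (st a))
    (hspsup : ∀ T : Set Q, sp (sSup T) = sSup (sp '' T))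
    (hsp1 : ∀ a : Q, sp a ≤ e)
    (hsp2 : ∀ a : Q, sp a ≤ m a (st a))
    (hsp3 : ∀ a : Q, a ≤ m (sp a) a) :
    IsPartialUnit m e st e ∧
    (∀ a b : Q, IsPartialUnit m e st a → IsPartialUnit m e st b →
      IsPartialUnit m e st (m a b)) ∧
    (∀ a : Q, IsPartialUnit m e st a → IsPartialUnit m e st (st a)) ∧
    (∀ a : Q, IsPartialUnit m e st a →
      m (m a (st a)) a = a ∧ m (m (st a) a) (st a) = st a) ∧
    (∀ a b : Q, IsPartialUnit m e st a → IsPartialUnit m e st b →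
      m (m a b) a = a → m (m b a) b = b → b = st a) ∧
    (∀ a : Q, IsPartialUnit m e st a → (m a a = a ↔ a ≤ e)) ∧
    (∀ a b : Q, IsPartialUnit m e st a → IsPartialUnit m e st b →
      ((∃ f : Q, IsPartialUnit m e st f ∧ m f f = f ∧ a = m f b) ↔ a ≤ b)) :=
  stmt_8_general m e st sp hassoc hdistl hdistr hel her hstsup hstst hstm hsp2 hsp3
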